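/- Let $K \subseteq \mathbb{R}^d$ be a symmetric convex body and suppose (John's theorem corollary) there exists a positive semidefinite matrix $\Xi$ with $\langle x, \Xi x\rangle \leq \sup_{f \in K^\star}|\langle f, x\rangle|^2 \leq d\, \langle x, \Xi x\rangle$ for all $x \in K$. Then for vectors $x_1, \ldots, x_n$ in the unit $\ell_\infty$ ball with $r = \dim \mathrm{span}(x_1,\ldots,x_n)$, applying this to $K = B_\infty \cap \mathrm{span}(x_{1:n})$ yields a PSD matrix $\Xi$ such that for all $S \in \mathrm{span}(x_{1:n})$: $\langle S, \Xi S\rangle \leq \|S\|_\infty^2 \leq r\, \langle S, \Xi S\rangle$, and consequently $\mathbb{E}_\varepsilon\|\sum_{t=1}^n \varepsilon_t x_t\|_\infty \leq \sqrt{r}\, \mathbb{E}_\varepsilon \sqrt{\langle S_\varepsilon, \Xi S_\varepsilon\rangle} \leq \sqrt{r}\cdot\sqrt{\sum_{t=1}^n \|x_t\|_\infty^2} \leq \sqrt{rn}$, where $S_\varepsilon = \sum_t \varepsilon_t x_t$. -/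

import Mathlib

/-!
Every signed sum `S_ε = ∑ εₜ xₜ` lies in the span, so the upper sandwich bound gives
`‖S_ε‖ ≤ √r √⟨S_ε, Ξ S_ε⟩` pointwise. Averaging over the signs, Cauchy–Schwarz
(`𝔼 √Z ≤ √(𝔼 Z)`) and the orthogonality `𝔼 εₛ εₜ = δₛₜ` of Rademacher signs reduce
`𝔼 ⟨S_ε, Ξ S_ε⟩` to `∑ ⟨xₜ, Ξ xₜ⟩`, which the lower sandwich bound controls by `∑ ‖xₜ‖² ≤ n`.
-/

open Finset Real Matrix

/-- The real sign `±1` associated to a boolean. -/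
noncomputable def sgn (b : Bool) : ℝ := if b then 1 else -1

lemma sgn_mul_self (b : Bool) : sgn b * sgn b = 1 := by
  cases b <;> norm_num [sgn]

lemma sgn_not (b : Bool) : sgn (!b) = -sgn b := by
  cases b <;> simp [sgn]

lemma sum_sqrt_le_sqrt_card_mul_sum {ι : Type*} (s : Finset ι) {a : ι → ℝ} (ha : ∀ i, 0 ≤ a i) :
    ∑ i ∈ s, √(a i) ≤ √(#s * ∑ i ∈ s, a i) := by
  simpa [mul_comm, Real.sqrt_mul (Nat.cast_nonneg _)] using
    Real.sum_sqrt_mul_sqrt_le s ha (fun _ => zero_le_one)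

section Rademacher

variable {ι : Type*} [Fintype ι] [DecidableEq ι]

lemma sum_sgn_mul_sgn_of_ne {s t : ι} (hst : s ≠ t) :
    ∑ σ : ι → Bool, sgn (σ s) * sgn (σ t) = 0 := by
  -- flipping the sign at `t` is a bijection that negates every summand
  let flip : (ι → Bool) ≃ (ι → Bool) :=
    Equiv.piCongrRight fun i => if i = t then Equiv.boolNot else Equiv.refl Bool
  have hflip : ∀ σ, sgn (flip σ s) * sgn (flip σ t) = -(sgn (σ s) * sgn (σ t)) := by
    intro σ
    simp [flip, hst, sgn_not]
  have h := flip.sum_comp fun σ => sgn (σ s) * sgn (σ t)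
  simp only [hflip, sum_neg_distrib] at h
  linarith

lemma sum_sgn_mul_sgn (s t : ι) :
    ∑ σ : ι → Bool, sgn (σ s) * sgn (σ t) = if s = t then 2 ^ Fintype.card ι else 0 := by
  split_ifs with hst
  · simp [hst, sgn_mul_self]
  · exact sum_sgn_mul_sgn_of_ne hst

variable {E : Type*} [AddCommGroup E] [Module ℝ E]

lemma sum_bilinForm_signedSum (B : LinearMap.BilinForm ℝ E) (x : ι → E) :
    ∑ σ : ι → Bool, B (∑ t, sgn (σ t) • x t) (∑ t, sgn (σ t) • x t) =
      2 ^ Fintype.card ι * ∑ t, B (x t) (x t) := by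
  have expand : ∀ σ : ι → Bool, B (∑ t, sgn (σ t) • x t) (∑ t, sgn (σ t) • x t) =
      ∑ s, ∑ u, sgn (σ s) * sgn (σ u) * B (x s) (x u) := by
    intro σ
    simp only [map_sum, map_smul, LinearMap.sum_apply, LinearMap.smul_apply, smul_eq_mul,
      Finset.mul_sum]
    rw [Finset.sum_comm]
    exact Finset.sum_congr rfl fun _ _ => Finset.sum_congr rfl fun _ _ => by ring
  calc ∑ σ : ι → Bool, B (∑ t, sgn (σ t) • x t) (∑ t, sgn (σ t) • x t)
      = ∑ s, ∑ u, (∑ σ : ι → Bool, sgn (σ s) * sgn (σ u)) * B (x s) (x u) := by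
        simp only [expand, Finset.sum_mul]
        rw [Finset.sum_comm]
        exact Finset.sum_congr rfl fun s _ => Finset.sum_comm
    _ = 2 ^ Fintype.card ι * ∑ t, B (x t) (x t) := by
        simp [sum_sgn_mul_sgn, Finset.mul_sum]

lemma sum_sqrt_bilinForm_signedSum_le (B : LinearMap.BilinForm ℝ E) (hB : ∀ v, 0 ≤ B v v)
    (x : ι → E) :
    ∑ σ : ι → Bool, √(B (∑ t, sgn (σ t) • x t) (∑ t, sgn (σ t) • x t)) ≤
      2 ^ Fintype.card ι * √(∑ t, B (x t) (x t)) := by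
  calc ∑ σ : ι → Bool, √(B (∑ t, sgn (σ t) • x t) (∑ t, sgn (σ t) • x t))
      ≤ √((2 ^ Fintype.card ι : ℝ) * (2 ^ Fintype.card ι * ∑ t, B (x t) (x t))) := by
        have hcard : (#(univ : Finset (ι → Bool)) : ℝ) = 2 ^ Fintype.card ι := by simp
        rw [← sum_bilinForm_signedSum, ← hcard]
        exact sum_sqrt_le_sqrt_card_mul_sum _ fun σ => hB _
    _ = 2 ^ Fintype.card ι * √(∑ t, B (x t) (x t)) := by
        rw [← mul_assoc, Real.sqrt_mul (by positivity), Real.sqrt_mul_self (by positivity)]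

end Rademacher

/-- John's theorem corollary applied to `B_∞ ∩ span(x_{1:n})`: given a PSD
matrix `Ξ` with `⟨S, ΞS⟩ ≤ ‖S‖∞² ≤ r ⟨S, ΞS⟩` on the span (where
`r = dim span(x_{1:n})`), for points of the unit `ℓ∞` ball one gets
`𝔼_ε ‖∑ εₜ xₜ‖∞ ≤ √r 𝔼_ε √⟨S_ε, Ξ S_ε⟩ ≤ √r √(∑ ‖xₜ‖∞²) ≤ √(rn)`. -/
theorem stmt_15 (d n : ℕ) (x : Fin n → Fin d → ℝ)
    (hx : ∀ t, ‖x t‖ ≤ 1)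
    (Ξ : Matrix (Fin d) (Fin d) ℝ) (hΞ : Ξ.PosSemidef)
    (hsand : ∀ S : Fin d → ℝ, S ∈ Submodule.span ℝ (Set.range x) →
      S ⬝ᵥ Ξ.mulVec S ≤ ‖S‖ ^ 2 ∧
      ‖S‖ ^ 2 ≤ (Module.finrank ℝ (Submodule.span ℝ (Set.range x)) : ℝ) *
        (S ⬝ᵥ Ξ.mulVec S)) :
    (∑ σ : Fin n → Bool, ‖∑ t, sgn (σ t) • x t‖) / 2 ^ n ≤
      Real.sqrt (Module.finrank ℝ (Submodule.span ℝ (Set.range x))) *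
        ((∑ σ : Fin n → Bool,
          Real.sqrt ((∑ t, sgn (σ t) • x t) ⬝ᵥ
            Ξ.mulVec (∑ t, sgn (σ t) • x t))) / 2 ^ n) ∧
    Real.sqrt (Module.finrank ℝ (Submodule.span ℝ (Set.range x))) *
        ((∑ σ : Fin n → Bool,
          Real.sqrt ((∑ t, sgn (σ t) • x t) ⬝ᵥ
            Ξ.mulVec (∑ t, sgn (σ t) • x t))) / 2 ^ n) ≤
      Real.sqrt (Module.finrank ℝ (Submodule.span ℝ (Set.range x))) *
        Real.sqrt (∑ t, ‖x t‖ ^ 2) ∧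
    Real.sqrt (Module.finrank ℝ (Submodule.span ℝ (Set.range x))) *
        Real.sqrt (∑ t, ‖x t‖ ^ 2) ≤
      Real.sqrt ((Module.finrank ℝ (Submodule.span ℝ (Set.range x))) * n) := by
  have hr : (0 : ℝ) ≤ Module.finrank ℝ (Submodule.span ℝ (Set.range x)) := Nat.cast_nonneg _
  have hx_mem : ∀ t, x t ∈ Submodule.span ℝ (Set.range x) := fun t =>
    Submodule.subset_span ⟨t, rfl⟩
  refine ⟨?_, ?_, ?_⟩
  · rw [← mul_div_assoc, Finset.mul_sum]
    gcongr with σ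
    have hS : ∑ t, sgn (σ t) • x t ∈ Submodule.span ℝ (Set.range x) :=
      Submodule.sum_mem _ fun t _ => Submodule.smul_mem _ _ (hx_mem t)
    rw [← Real.sqrt_mul hr]
    exact Real.le_sqrt_of_sq_le (hsand _ hS).2
  · gcongr
    rw [div_le_iff₀ (by positivity), mul_comm]
    have hΞ_nonneg : ∀ v, 0 ≤ Matrix.toBilin' Ξ v v := fun v => by
      simpa [Matrix.toBilin'_apply'] using hΞ.dotProduct_mulVec_nonneg v
    calc _ ≤ 2 ^ n * √(∑ t, x t ⬝ᵥ Ξ *ᵥ x t) := by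
          have h := sum_sqrt_bilinForm_signedSum_le (Matrix.toBilin' Ξ) hΞ_nonneg x
          simpa only [Matrix.toBilin'_apply', Fintype.card_fin] using h
      _ ≤ _ := by
          gcongr with t
          exact (hsand _ (hx_mem t)).1
  · rw [← Real.sqrt_mul hr]
    gcongr
    calc ∑ t, ‖x t‖ ^ 2 ≤ ∑ _t : Fin n, (1 : ℝ) := by
          gcongr with t
          exact pow_le_one₀ (norm_nonneg _) (hx t)
      _ = n := by simp
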